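/- For all real numbers 0 < m ≤ M < ∞ and all t ≥ 2, there exists a positive constant C such that for all a with m ≤ a ≤ M and all b ≥ -a, one has (t-1)·a^{t-2}·b² ≤ (a+b)^t − a^t − t·a^{t-1}·b ≤ C·b²·(1 + |b|^{t-2}). -/

import Mathlib

/-!
Write `R(a, b) = (a + b)^t - a^t - t a^(t-1) b`. For the lower bound, Bernoulli's inequality for the
exponent `t / 2` gives `(a + b)^(t/2) ≥ a^(t/2-1) (a + t b / 2)`; squaring (when the right side is
nonnegative) yields `R ≥ (t² / 4) a^(t-2) b² ≥ (t - 1) a^(t-2) b²`, and when `a + t b / 2 < 0` the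
claim reduces to `a^(t-2) (a + b) (a + (t - 1) b) ≤ (a + b)^t`, whose left side is `≤ 0`.
For the upper bound, two tangent-line inequalities give
`R ≤ t b ((a + b)^(t-1) - a^(t-1)) ≤ t (t - 1) (a + |b|)^(t-2) b²`, and
`(a + |b|)^(t-2) ≤ (M + 1)^(t-2) (1 + |b|^(t-2))`.
-/

open Real

noncomputable def rpowTaylorRemainder (t a b : ℝ) : ℝ :=
  (a + b) ^ t - a ^ t - t * a ^ (t - 1) * b

theorem rpow_tangent_line_le {u v p : ℝ} (hu : 0 ≤ u) (hv : 0 ≤ v) (hp : 1 ≤ p) :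
    u ^ p + p * u ^ (p - 1) * (v - u) ≤ v ^ p := by
  rcases hu.eq_or_lt with rfl | hu
  · rcases hp.eq_or_lt with rfl | hp
    · simp
    · simp [zero_rpow (by linarith : p ≠ 0), zero_rpow (by linarith : p - 1 ≠ 0),
        rpow_nonneg hv]
  · have bernoulli := one_add_mul_self_le_rpow_one_add
      (by rw [le_div_iff₀ hu]; linarith : -1 ≤ (v - u) / u) hp
    rw [show 1 + (v - u) / u = v / u by field_simp; ring, div_rpow hv hu.le] at bernoulli
    have hup : 0 < u ^ p := rpow_pos_of_pos hu p
    calc u ^ p + p * u ^ (p - 1) * (v - u) = u ^ p * (1 + p * ((v - u) / u)) := by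
          rw [rpow_sub_one hu.ne']; field_simp
      _ ≤ u ^ p * (v ^ p / u ^ p) := by gcongr
      _ = v ^ p := by field_simp

theorem sub_mul_rpow_sub_rpow_le {u v p : ℝ} (hu : 0 ≤ u) (hv : 0 ≤ v) (hp : 1 ≤ p) :
    (v - u) * (v ^ p - u ^ p) ≤ p * max u v ^ (p - 1) * (v - u) ^ 2 := by
  rcases le_total u v with huv | hvu
  · have := rpow_tangent_line_le hv hu hp
    rw [max_eq_right huv]
    nlinarith [mul_le_mul_of_nonneg_left this (sub_nonneg.2 huv)]
  · have := rpow_tangent_line_le hu hv hp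
    rw [max_eq_left hvu]
    nlinarith [mul_le_mul_of_nonneg_left this (sub_nonneg.2 hvu)]

theorem rpow_add_le_add_one_rpow_mul {c y q : ℝ} (hc : 0 ≤ c) (hy : 0 ≤ y) (hq : 0 ≤ q) :
    (c + y) ^ q ≤ (c + 1) ^ q * (1 + y ^ q) := by
  have hcq : 0 ≤ (c + 1) ^ q := by positivity
  rcases le_total y 1 with hy1 | hy1
  · calc (c + y) ^ q ≤ (c + 1) ^ q := by gcongr
      _ ≤ (c + 1) ^ q * (1 + y ^ q) := le_mul_of_one_le_right hcq (by simp [rpow_nonneg hy])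
  · calc (c + y) ^ q ≤ ((c + 1) * y) ^ q := by gcongr; nlinarith
      _ = (c + 1) ^ q * y ^ q := mul_rpow (by linarith) hy
      _ ≤ (c + 1) ^ q * (1 + y ^ q) := by gcongr; simp

theorem sub_one_mul_rpow_sub_two_mul_sq_le_rpowTaylorRemainder {t a b : ℝ} (ht : 2 ≤ t)
    (ha : 0 < a) (hab : 0 ≤ a + b) :
    (t - 1) * a ^ (t - 2) * b ^ 2 ≤ rpowTaylorRemainder t a b := by
  obtain ⟨p, rfl⟩ : ∃ p, t = 2 * p := ⟨t / 2, by ring⟩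
  have hA : 0 < a ^ (2 * p - 2) := rpow_pos_of_pos ha _
  have hat1 : a ^ (2 * p - 1) = a ^ (2 * p - 2) * a := by
    rw [← rpow_add_one ha.ne']; ring_nf
  have hat : a ^ (2 * p) = a ^ (2 * p - 2) * a ^ 2 := by
    rw [← rpow_add_natCast ha.ne']; norm_num
  unfold rpowTaylorRemainder
  rw [hat1, hat]
  rcases le_or_gt 0 (a + p * b) with hpb | hpb
  · have tangent : a ^ (p - 1) * (a + p * b) ≤ (a + b) ^ p :=
      calc a ^ (p - 1) * (a + p * b) = a ^ p + p * a ^ (p - 1) * (a + b - a) := by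
            rw [rpow_sub_one ha.ne']; field_simp; ring
        _ ≤ (a + b) ^ p := rpow_tangent_line_le ha.le hab (by linarith)
    have hsq := pow_le_pow_left₀ (mul_nonneg (rpow_nonneg ha.le _) hpb) tangent 2
    rw [mul_pow, ← rpow_mul_natCast ha.le, ← rpow_mul_natCast hab] at hsq
    push_cast at hsq
    rw [show (p - 1) * 2 = 2 * p - 2 by ring, mul_comm p 2] at hsq
    -- `p² - (2p - 1) = (p - 1)²`
    nlinarith [mul_nonneg hA.le (mul_nonneg (sq_nonneg (p - 1)) (sq_nonneg b))]
  · have hb : b < 0 := by nlinarith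
    have hbt : a + (2 * p - 1) * b ≤ 0 := by nlinarith
    have hneg : a ^ (2 * p - 2) * ((a + b) * (a + (2 * p - 1) * b)) ≤ 0 :=
      mul_nonpos_of_nonneg_of_nonpos hA.le (mul_nonpos_of_nonneg_of_nonpos hab hbt)
    nlinarith [rpow_nonneg hab (2 * p)]

theorem rpowTaylorRemainder_le {t a b : ℝ} (ht : 2 ≤ t) (ha : 0 ≤ a) (hab : 0 ≤ a + b) :
    rpowTaylorRemainder t a b ≤ t * (t - 1) * (a + |b|) ^ (t - 2) * b ^ 2 := by
  have tangent := rpow_tangent_line_le hab ha (by linarith : 1 ≤ t)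
  have secant := sub_mul_rpow_sub_rpow_le ha hab (by linarith : 1 ≤ t - 1)
  rw [add_sub_cancel_left, show t - 1 - 1 = t - 2 by ring] at secant
  have hmax : max a (a + b) ^ (t - 2) ≤ (a + |b|) ^ (t - 2) :=
    rpow_le_rpow (le_max_of_le_left ha)
      (max_le (le_add_of_nonneg_right (abs_nonneg b)) (by linarith [le_abs_self b]))
      (by linarith)
  unfold rpowTaylorRemainder
  calc (a + b) ^ t - a ^ t - t * a ^ (t - 1) * b
      ≤ t * (b * ((a + b) ^ (t - 1) - a ^ (t - 1))) := by nlinarith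
    _ ≤ t * ((t - 1) * max a (a + b) ^ (t - 2) * b ^ 2) := by gcongr
    _ = t * (t - 1) * b ^ 2 * max a (a + b) ^ (t - 2) := by ring
    _ ≤ t * (t - 1) * b ^ 2 * (a + |b|) ^ (t - 2) :=
      mul_le_mul_of_nonneg_left hmax (mul_nonneg (by nlinarith) (sq_nonneg b))
    _ = t * (t - 1) * (a + |b|) ^ (t - 2) * b ^ 2 := by ring

/-- Taylor-type two-sided bound for the convex power function `x ↦ x^t` on `[0,∞)`,
with real exponent `t ≥ 2`. -/
theorem taylor_power_two_sided_bound
    (m M : ℝ) (hm : 0 < m) (hmM : m ≤ M) (t : ℝ) (ht : 2 ≤ t) :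
    ∃ C : ℝ, 0 < C ∧ ∀ a b : ℝ, m ≤ a → a ≤ M → -a ≤ b →
      (t - 1) * a ^ (t - 2) * b ^ 2 ≤ (a + b) ^ t - a ^ t - t * a ^ (t - 1) * b ∧
      (a + b) ^ t - a ^ t - t * a ^ (t - 1) * b ≤ C * b ^ 2 * (1 + |b| ^ (t - 2)) := by
  have hM : 0 < M := hm.trans_le hmM
  have ht1 : 0 < t - 1 := by linarith
  refine ⟨t * (t - 1) * (M + 1) ^ (t - 2), by positivity, fun a b hma haM hba => ?_⟩
  have ha : 0 < a := hm.trans_le hma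
  have hab : 0 ≤ a + b := by linarith
  refine ⟨sub_one_mul_rpow_sub_two_mul_sq_le_rpowTaylorRemainder ht ha hab, ?_⟩
  calc rpowTaylorRemainder t a b ≤ t * (t - 1) * (a + |b|) ^ (t - 2) * b ^ 2 :=
        rpowTaylorRemainder_le ht ha.le hab
    _ ≤ t * (t - 1) * ((M + 1) ^ (t - 2) * (1 + |b| ^ (t - 2))) * b ^ 2 := by
        gcongr
        calc (a + |b|) ^ (t - 2) ≤ (M + |b|) ^ (t - 2) := by gcongr
          _ ≤ _ := rpow_add_le_add_one_rpow_mul hM.le (abs_nonneg b) (by linarith)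
    _ = t * (t - 1) * (M + 1) ^ (t - 2) * b ^ 2 * (1 + |b| ^ (t - 2)) := by ring
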